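/- Let m > n be positive integers, ψ(x,y) = -cos(mx)cos(ny), and define f(x,y) = cos(x)·(1 + a₀·cos(2mx) + b₀·cos(2ny)) with a₀ = −(4m²+1)/(16m⁴+24m²+1) and b₀ = 1/(4n²+1). Then φ = {ψ, f} satisfies MI(φ) = ∫₀^{2π}∫₀^{2π} ((∂ₓφ)² + (∂_yφ)² − (m²+n²)φ²) dx dy < 0. -/

import Mathlib

/-!
The bracket `φ = {ψ, f}` is a finite double sine series `∑ cᵢ sin (pᵢ x) sin (qᵢ y)` with the six
distinct modes `(m ± 1, n)`, `(3m ± 1, n)`, `(m ± 1, 3n)`. By orthogonality of sines and cosines on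
`[0, 2π]`, `MI(φ) = π² ∑ cᵢ² (pᵢ² + qᵢ² - m² - n²)`. For the given `a₀, b₀` this sum equals
`n² G / (4 (16m⁴ + 24m² + 1)(4n² + 1))` with
`G = (4n² + 1)(16m⁴ + 40m² + 1) - 4m²(4m² + 1)(4m² + 3)`, and `G < 0` as soon as `n < m`.
-/

open Real MeasureTheory

/-- Partial derivative in the first variable of a curried function `ℝ → ℝ → ℝ`. -/
noncomputable def pdx (φ : ℝ → ℝ → ℝ) (x y : ℝ) : ℝ := deriv (fun t => φ t y) x

/-- Partial derivative in the second variable of a curried function `ℝ → ℝ → ℝ`. -/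
noncomputable def pdy (φ : ℝ → ℝ → ℝ) (x y : ℝ) : ℝ := deriv (fun t => φ x t) y

/-- Poisson bracket `{ψ, f} = ∂ₓψ ∂_y f − ∂_y ψ ∂ₓ f`. -/
noncomputable def pb (ψ f : ℝ → ℝ → ℝ) : ℝ → ℝ → ℝ :=
  fun x y => pdx ψ x y * pdy f x y - pdy ψ x y * pdx f x y

/-- Misiołek index with coefficient `lam2` (usually `m² + n²`):
`∫₀^{2π}∫₀^{2π} ((∂ₓφ)² + (∂_yφ)² − lam2·φ²) dx dy`. -/
noncomputable def MI (lam2 : ℝ) (φ : ℝ → ℝ → ℝ) : ℝ :=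
  ∫ y in (0:ℝ)..(2 * π), ∫ x in (0:ℝ)..(2 * π),
    ((pdx φ x y) ^ 2 + (pdy φ x y) ^ 2 - lam2 * (φ x y) ^ 2)

open Finset

theorem intervalIntegrable_cos_mul (k : ℝ) {a b : ℝ} :
    IntervalIntegrable (fun x => cos (k * x)) volume a b :=
  (continuous_cos.comp (continuous_const.mul continuous_id)).intervalIntegrable _ _

theorem integral_cos_int_mul_eq_zero {k : ℤ} (hk : k ≠ 0) :
    ∫ x in (0:ℝ)..2 * π, cos (k * x) = 0 := by
  rw [intervalIntegral.integral_comp_mul_left cos (Int.cast_ne_zero.mpr hk), integral_cos,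
    show (k : ℝ) * (2 * π) = (2 * k : ℤ) * π by push_cast; ring, sin_int_mul_pi]
  simp

theorem integral_cos_mul_cos_eq_ite {p q : ℕ} (hq : q ≠ 0) :
    ∫ x in (0:ℝ)..2 * π, cos (p * x) * cos (q * x) = if p = q then π else 0 := by
  have h : ∀ x : ℝ, cos (p * x) * cos (q * x)
      = (cos (((p - q : ℤ) : ℝ) * x) + cos (((p + q : ℤ) : ℝ) * x)) / 2 := by
    intro x; push_cast; rw [sub_mul, add_mul, cos_sub, cos_add]; ring
  simp_rw [h]
  rw [intervalIntegral.integral_div,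
    intervalIntegral.integral_add (intervalIntegrable_cos_mul _) (intervalIntegrable_cos_mul _),
    integral_cos_int_mul_eq_zero (k := p + q) (by omega)]
  split_ifs with hpq
  · simp [hpq]
  · rw [integral_cos_int_mul_eq_zero (by omega)]; simp

theorem integral_sin_mul_sin_eq_ite {p q : ℕ} (hq : q ≠ 0) :
    ∫ x in (0:ℝ)..2 * π, sin (p * x) * sin (q * x) = if p = q then π else 0 := by
  have h : ∀ x : ℝ, sin (p * x) * sin (q * x)
      = (cos (((p - q : ℤ) : ℝ) * x) - cos (((p + q : ℤ) : ℝ) * x)) / 2 := by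
    intro x; push_cast; rw [sub_mul, add_mul, cos_sub, cos_add]; ring
  simp_rw [h]
  rw [intervalIntegral.integral_div,
    intervalIntegral.integral_sub (intervalIntegrable_cos_mul _) (intervalIntegrable_cos_mul _),
    integral_cos_int_mul_eq_zero (k := p + q) (by omega)]
  split_ifs with hpq
  · simp [hpq]
  · rw [integral_cos_int_mul_eq_zero (by omega)]; simp

noncomputable def squareIntegral (F : ℝ → ℝ → ℝ) : ℝ :=
  ∫ y in (0:ℝ)..2 * π, ∫ x in (0:ℝ)..2 * π, F x y

section squareIntegral

variable {F G : ℝ → ℝ → ℝ}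

theorem intervalIntegrable_parametric_integral
    (hF : Continuous fun z : ℝ × ℝ => F z.1 z.2) :
    IntervalIntegrable (fun y => ∫ x in (0:ℝ)..2 * π, F x y) volume 0 (2 * π) :=
  (intervalIntegral.continuous_parametric_intervalIntegral_of_continuous'
    (f := fun y x => F x y) (hF.comp continuous_swap) _ _).intervalIntegrable _ _

theorem intervalIntegrable_slice (hF : Continuous fun z : ℝ × ℝ => F z.1 z.2)
    (y : ℝ) :
    IntervalIntegrable (fun x => F x y) volume 0 (2 * π) :=
  (hF.comp (continuous_id.prodMk continuous_const)).intervalIntegrable _ _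

theorem squareIntegral_add (hF : Continuous fun z : ℝ × ℝ => F z.1 z.2)
    (hG : Continuous fun z : ℝ × ℝ => G z.1 z.2) :
    squareIntegral (fun x y => F x y + G x y) = squareIntegral F + squareIntegral G := by
  unfold squareIntegral
  rw [← intervalIntegral.integral_add (intervalIntegrable_parametric_integral hF)
    (intervalIntegrable_parametric_integral hG)]
  exact intervalIntegral.integral_congr fun y _ => intervalIntegral.integral_add
    (intervalIntegrable_slice hF y) (intervalIntegrable_slice hG y)

theorem squareIntegral_sub (hF : Continuous fun z : ℝ × ℝ => F z.1 z.2)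
    (hG : Continuous fun z : ℝ × ℝ => G z.1 z.2) :
    squareIntegral (fun x y => F x y - G x y) = squareIntegral F - squareIntegral G := by
  unfold squareIntegral
  rw [← intervalIntegral.integral_sub (intervalIntegrable_parametric_integral hF)
    (intervalIntegrable_parametric_integral hG)]
  exact intervalIntegral.integral_congr fun y _ => intervalIntegral.integral_sub
    (intervalIntegrable_slice hF y) (intervalIntegrable_slice hG y)

theorem squareIntegral_const_mul (c : ℝ) (F : ℝ → ℝ → ℝ) :
    squareIntegral (fun x y => c * F x y) = c * squareIntegral F := by
  simp only [squareIntegral, intervalIntegral.integral_const_mul]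

theorem squareIntegral_finsetSum {ι : Type*} (s : Finset ι) {F : ι → ℝ → ℝ → ℝ}
    (hF : ∀ i ∈ s, Continuous fun z : ℝ × ℝ => F i z.1 z.2) :
    squareIntegral (fun x y => ∑ i ∈ s, F i x y) = ∑ i ∈ s, squareIntegral (F i) := by
  unfold squareIntegral
  rw [← intervalIntegral.integral_finsetSum fun i hi =>
    intervalIntegrable_parametric_integral (hF i hi)]
  exact intervalIntegral.integral_congr fun y _ => intervalIntegral.integral_finsetSum
    fun i hi => intervalIntegrable_slice (hF i hi) y

theorem squareIntegral_mul (u v : ℝ → ℝ) :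
    squareIntegral (fun x y => u x * v y)
      = (∫ x in (0:ℝ)..2 * π, u x) * ∫ y in (0:ℝ)..2 * π, v y := by
  simp only [squareIntegral, intervalIntegral.integral_mul_const,
    intervalIntegral.integral_const_mul]

end squareIntegral

theorem squareIntegral_sq_sum {ι : Type*} [Fintype ι] (c : ι → ℝ) {u v : ι → ℝ → ℝ}
    (hu : ∀ i, Continuous (u i)) (hv : ∀ i, Continuous (v i)) :
    squareIntegral (fun x y => (∑ i, c i * (u i x * v i y)) ^ 2)
      = ∑ i, ∑ j, c i * c j * ((∫ x in (0:ℝ)..2 * π, u i x * u j x)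
          * ∫ y in (0:ℝ)..2 * π, v i y * v j y) := by
  have hexpand : ∀ x y, (∑ i, c i * (u i x * v i y)) ^ 2
      = ∑ i, ∑ j, c i * c j * ((u i x * u j x) * (v i y * v j y)) := by
    intro x y
    rw [sq, sum_mul_sum]
    exact sum_congr rfl fun i _ => sum_congr rfl fun j _ => by ring
  simp_rw [hexpand]
  rw [squareIntegral_finsetSum _ fun i _ => by fun_prop]
  refine sum_congr rfl fun i _ => ?_
  rw [squareIntegral_finsetSum _ fun j _ => by fun_prop]
  exact sum_congr rfl fun j _ => by rw [squareIntegral_const_mul, squareIntegral_mul]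

theorem squareIntegral_sq_sum_of_orthogonal {ι : Type*} [Fintype ι] (c : ι → ℝ)
    {u v : ι → ℝ → ℝ} (hu : ∀ i, Continuous (u i)) (hv : ∀ i, Continuous (v i))
    {p q : ι → ℕ} (hpq : Function.Injective fun i => (p i, q i))
    (hup : ∀ i j, ∫ x in (0:ℝ)..2 * π, u i x * u j x = if p i = p j then π else 0)
    (hvq : ∀ i j, ∫ y in (0:ℝ)..2 * π, v i y * v j y = if q i = q j then π else 0) :
    squareIntegral (fun x y => (∑ i, c i * (u i x * v i y)) ^ 2) = π ^ 2 * ∑ i, c i ^ 2 := by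
  classical
  have hdiag : ∀ i j, (if p i = p j then π else 0) * (if q i = q j then π else 0)
      = if i = j then π ^ 2 else 0 := by
    intro i j
    by_cases hij : i = j
    · simp [hij, sq]
    · have : ¬(p i = p j ∧ q i = q j) := fun h => hij (hpq (Prod.ext h.1 h.2))
      rw [if_neg hij]
      split_ifs <;> simp_all
  simp_rw [squareIntegral_sq_sum c hu hv, hup, hvq, hdiag, mul_sum]
  simp [sq, mul_comm, mul_left_comm]

theorem hasDerivAt_sin_mul (k x : ℝ) : HasDerivAt (fun t => sin (k * t)) (k * cos (k * x)) x := by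
  simpa [mul_comm] using ((hasDerivAt_id x).const_mul k).sin

theorem hasDerivAt_cos_mul (k x : ℝ) :
    HasDerivAt (fun t => cos (k * t)) (-(k * sin (k * x))) x := by
  simpa [mul_comm] using ((hasDerivAt_id x).const_mul k).cos

noncomputable def doubleSineSum {ι : Type*} [Fintype ι] (c : ι → ℝ) (p q : ι → ℕ) (x y : ℝ) :
    ℝ :=
  ∑ i, c i * (sin (p i * x) * sin (q i * y))

section doubleSineSum

variable {ι : Type*} [Fintype ι] (c : ι → ℝ) (p q : ι → ℕ)

theorem pdx_doubleSineSum (x y : ℝ) :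
    pdx (doubleSineSum c p q) x y = ∑ i, c i * p i * (cos (p i * x) * sin (q i * y)) := by
  refine (HasDerivAt.fun_sum fun i _ => ?_).deriv
  exact (((hasDerivAt_sin_mul (p i) x).mul_const (sin (q i * y))).const_mul (c i)).congr_deriv
    (by ring)

theorem pdy_doubleSineSum (x y : ℝ) :
    pdy (doubleSineSum c p q) x y = ∑ i, c i * q i * (sin (p i * x) * cos (q i * y)) := by
  refine (HasDerivAt.fun_sum fun i _ => ?_).deriv
  exact (((hasDerivAt_sin_mul (q i) y).const_mul (sin (p i * x))).const_mul (c i)).congr_deriv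
    (by ring)

theorem MI_doubleSineSum (hp : ∀ i, p i ≠ 0) (hq : ∀ i, q i ≠ 0)
    (hpq : Function.Injective fun i => (p i, q i)) (lam : ℝ) :
    MI lam (doubleSineSum c p q) = π ^ 2 * ∑ i, c i ^ 2 * (p i ^ 2 + q i ^ 2 - lam) := by
  have hsin : ∀ (k : ι → ℕ), (∀ i, k i ≠ 0) → ∀ i j,
      ∫ x in (0:ℝ)..2 * π, sin (k i * x) * sin (k j * x) = if k i = k j then π else 0 :=
    fun k hk i j => integral_sin_mul_sin_eq_ite (hk j)
  have hcos : ∀ (k : ι → ℕ), (∀ i, k i ≠ 0) → ∀ i j,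
      ∫ x in (0:ℝ)..2 * π, cos (k i * x) * cos (k j * x) = if k i = k j then π else 0 :=
    fun k hk i j => integral_cos_mul_cos_eq_ite (hk j)
  have hdx := squareIntegral_sq_sum_of_orthogonal (fun i => c i * p i) (fun i => by fun_prop)
    (fun i => by fun_prop) hpq (hcos p hp) (hsin q hq)
  have hdy := squareIntegral_sq_sum_of_orthogonal (fun i => c i * q i) (fun i => by fun_prop)
    (fun i => by fun_prop) hpq (hsin p hp) (hcos q hq)
  have h0 := squareIntegral_sq_sum_of_orthogonal c (fun i => by fun_prop)
    (fun i => by fun_prop) hpq (hsin p hp) (hsin q hq)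
  simp only [MI, pdx_doubleSineSum, pdy_doubleSineSum, doubleSineSum]
  change squareIntegral _ = _
  rw [squareIntegral_sub (by fun_prop) (by fun_prop),
    squareIntegral_add (by fun_prop) (by fun_prop),
    squareIntegral_const_mul, hdx, hdy, h0]
  simp only [mul_sum, ← sum_add_distrib, ← sum_sub_distrib]
  exact sum_congr rfl fun i _ => by ring

end doubleSineSum

def offDiagFreqX (m : ℕ) : Fin 6 → ℕ := ![m + 1, m - 1, 3 * m + 1, 3 * m - 1, m + 1, m - 1]

def offDiagFreqY (n : ℕ) : Fin 6 → ℕ := ![n, n, n, n, 3 * n, 3 * n]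

noncomputable def offDiagCoeff (m n a b : ℝ) : Fin 6 → ℝ :=
  ![n / 4 * (2 + (2 * m + 1) * (a - b)), n / 4 * (-2 + (2 * m - 1) * (a - b)),
    n / 4 * a * (2 * m + 1), n / 4 * a * (2 * m - 1),
    -(n / 4 * b * (2 * m - 1)), -(n / 4 * b * (2 * m + 1))]

theorem pb_eq_doubleSineSum (m n : ℕ) (hm : 1 ≤ m) (a b : ℝ) :
    pb (fun x y => -(cos (m * x) * cos (n * y)))
        (fun x y => cos x * (1 + a * cos (2 * m * x) + b * cos (2 * n * y)))
      = doubleSineSum (offDiagCoeff m n a b) (offDiagFreqX m) (offDiagFreqY n) := by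
  funext x y
  have hψx : pdx (fun x y => -(cos (m * x) * cos (n * y))) x y = m * sin (m * x) * cos (n * y) :=
    (((hasDerivAt_cos_mul m x).mul_const (cos (n * y))).neg.congr_deriv (by ring)).deriv
  have hψy : pdy (fun x y => -(cos (m * x) * cos (n * y))) x y = n * cos (m * x) * sin (n * y) :=
    (((hasDerivAt_cos_mul n y).const_mul (cos (m * x))).neg.congr_deriv (by ring)).deriv
  have hfx : pdx (fun x y => cos x * (1 + a * cos (2 * m * x) + b * cos (2 * n * y))) x y
      = -sin x * (1 + a * cos (2 * m * x) + b * cos (2 * n * y))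
        - 2 * m * a * cos x * sin (2 * m * x) :=
    ((hasDerivAt_cos x).mul ((((hasDerivAt_cos_mul (2 * m) x).const_mul a).const_add 1).add_const
      (b * cos (2 * n * y))) |>.congr_deriv (by ring)).deriv
  have hfy : pdy (fun x y => cos x * (1 + a * cos (2 * m * x) + b * cos (2 * n * y))) x y
      = -(2 * n * b * cos x * sin (2 * n * y)) :=
    ((((hasDerivAt_cos_mul (2 * n) y).const_mul b).const_add _).const_mul (cos x)
      |>.congr_deriv (by ring)).deriv
  simp only [pb, hψx, hψy, hfx, hfy, doubleSineSum, Fin.sum_univ_six, offDiagCoeff, offDiagFreqX,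
    offDiagFreqY, Matrix.cons_val]
  push_cast [Nat.cast_sub hm, Nat.cast_sub (by omega : 1 ≤ 3 * m)]
  have e1 : ((m : ℝ) + 1) * x = m * x + x := by ring
  have e2 : ((m : ℝ) - 1) * x = m * x - x := by ring
  have e3 : (3 * (m : ℝ) + 1) * x = 3 * (m * x) + x := by ring
  have e4 : (3 * (m : ℝ) - 1) * x = 3 * (m * x) - x := by ring
  have e5 : 2 * (m : ℝ) * x = 2 * (m * x) := by ring
  have e6 : 2 * (n : ℝ) * y = 2 * (n * y) := by ring
  have e7 : 3 * (n : ℝ) * y = 3 * (n * y) := by ring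
  rw [e1, e2, e3, e4, e5, e6, e7]
  simp only [sin_add, sin_sub, sin_two_mul, cos_two_mul, sin_three_mul, cos_three_mul]
  linear_combination
    (2 * n * b * sin (n * y) * cos (m * x) * sin x
      - 4 * m * n * b * cos x * sin (n * y) * sin (m * x)) * sin_sq_add_cos_sq ((n : ℝ) * y)
    + 4 * m * n * a * cos x * sin (n * y) * sin (m * x) * sin_sq_add_cos_sq ((m : ℝ) * x)

theorem offDiagFreqX_ne_zero {m : ℕ} (hm : 2 ≤ m) (i : Fin 6) : offDiagFreqX m i ≠ 0 := by
  fin_cases i <;> simp [offDiagFreqX] <;> omega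

theorem offDiagFreqY_ne_zero {n : ℕ} (hn : n ≠ 0) (i : Fin 6) : offDiagFreqY n i ≠ 0 := by
  fin_cases i <;> simp [offDiagFreqY, hn]

theorem injective_offDiagFreq {m n : ℕ} (hm : 2 ≤ m) (hn : n ≠ 0) :
    Function.Injective fun i => (offDiagFreqX m i, offDiagFreqY n i) := by
  intro i j h
  fin_cases i <;> fin_cases j <;> simp [offDiagFreqX, offDiagFreqY] at h ⊢ <;> omega

theorem offDiag_numerator_neg {M N : ℝ} (hN : 1 ≤ N) (hMN : N + 1 ≤ M) :
    (4 * N ^ 2 + 1) * (16 * M ^ 4 + 40 * M ^ 2 + 1)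
      < 4 * M ^ 2 * (4 * M ^ 2 + 1) * (4 * M ^ 2 + 3) := by
  have hN2 : 4 * N ^ 2 + 1 ≤ 4 * (M - 1) ^ 2 + 1 := by nlinarith
  calc (4 * N ^ 2 + 1) * (16 * M ^ 4 + 40 * M ^ 2 + 1)
      ≤ (4 * (M - 1) ^ 2 + 1) * (16 * M ^ 4 + 40 * M ^ 2 + 1) := by gcongr
    _ < 4 * M ^ 2 * (4 * M ^ 2 + 1) * (4 * M ^ 2 + 3) := by
      nlinarith [sq_nonneg (M - 2), sq_nonneg (M * (M - 2)), sq_nonneg (M ^ 2 - 2 * M)]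

theorem sum_offDiagCoeff_sq_mul_neg {m n : ℕ} (hn : 0 < n) (hmn : n < m) :
    ∑ i, offDiagCoeff m n (-(4 * (m : ℝ) ^ 2 + 1) / (16 * (m : ℝ) ^ 4 + 24 * (m : ℝ) ^ 2 + 1))
        (1 / (4 * (n : ℝ) ^ 2 + 1)) i ^ 2
        * ((offDiagFreqX m i : ℝ) ^ 2 + (offDiagFreqY n i : ℝ) ^ 2
          - ((m : ℝ) ^ 2 + (n : ℝ) ^ 2))
      < 0 := by
  have hN : (1 : ℝ) ≤ n := by exact_mod_cast hn
  have hMN : (n : ℝ) + 1 ≤ m := by exact_mod_cast hmn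
  simp only [Fin.sum_univ_six, offDiagCoeff, offDiagFreqX, offDiagFreqY, Matrix.cons_val]
  push_cast [Nat.cast_sub (by omega : 1 ≤ m), Nat.cast_sub (by omega : 1 ≤ 3 * m)]
  calc _ = (n : ℝ) ^ 2 * ((4 * (n : ℝ) ^ 2 + 1) * (16 * (m : ℝ) ^ 4 + 40 * (m : ℝ) ^ 2 + 1)
          - 4 * (m : ℝ) ^ 2 * (4 * (m : ℝ) ^ 2 + 1) * (4 * (m : ℝ) ^ 2 + 3))
        / (4 * (16 * (m : ℝ) ^ 4 + 24 * (m : ℝ) ^ 2 + 1) * (4 * (n : ℝ) ^ 2 + 1)) := by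
        field_simp
        ring
    _ < 0 := div_neg_of_neg_of_pos (mul_neg_of_pos_of_neg (by positivity)
        (sub_neg.mpr (offDiag_numerator_neg hN hMN))) (by positivity)

theorem misiolek_offdiagonal (m n : ℕ) (hn : 0 < n) (hmn : n < m) :
    let a₀ : ℝ := -(4 * (m : ℝ) ^ 2 + 1) / (16 * (m : ℝ) ^ 4 + 24 * (m : ℝ) ^ 2 + 1)
    let b₀ : ℝ := 1 / (4 * (n : ℝ) ^ 2 + 1)
    let ψ : ℝ → ℝ → ℝ := fun x y => -(Real.cos (m * x) * Real.cos (n * y))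
    let f : ℝ → ℝ → ℝ := fun x y =>
      Real.cos x * (1 + a₀ * Real.cos (2 * m * x) + b₀ * Real.cos (2 * n * y))
    MI ((m : ℝ) ^ 2 + (n : ℝ) ^ 2) (pb ψ f) < 0 := by
  intro a₀ b₀ ψ f
  have hm : 2 ≤ m := by omega
  rw [pb_eq_doubleSineSum m n (by omega) a₀ b₀,
    MI_doubleSineSum _ _ _ (offDiagFreqX_ne_zero hm) (offDiagFreqY_ne_zero hn.ne')
      (injective_offDiagFreq hm hn.ne')]
  exact mul_neg_of_pos_of_neg (by positivity) (sum_offDiagCoeff_sq_mul_neg hn hmn)
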